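/- arXiv:1906.03759 — 2 statements merged into one kernel-verified Lean document; each statement's English description precedes it below -/
import Mathlib

section
/- Let N, M be positive integers with 2M ≤ N, let U, D, U', D' ⊆ {1,…,M} satisfy U∪D = U'∪D', U∩D = U'∩D' and 1 ∉ U∪D (hence 1 ∉ U'∪D'), and let β ∈ {2,…,M}∖(U∪D). Write W̄ := {N+1−w : w∈W}, 1U := U∪{1}, 1D := D∪{1}, βD := D∪{β}, 1βD := D∪{1,β}. Then the following two quantities are unchanged when (U,D) is replaced by (U',D'): (i) Δ(U∪(1D)‾)·Δ(1U∪(βD)‾) / [Δ(U∪D̄)·Δ(U∪(βD)‾)]; (ii) Δ(1U∪D̄)·Δ(U∪(1βD)‾) / [Δ(U∪D̄)·Δ(U∪(βD)‾)]. (All the sets occurring consist of distinct integers, so all the Δ's are nonzero.) -/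
open Finset

namespace Shuf

/-- A unit triangle of the triangular lattice: `(a, b, o)` where `o = false` is the
up-pointing unit triangle with vertices `(a,b), (a+1,b), (a,b+1)` (in the lattice
coordinates whose embedding is `(a,b) ↦ (a + b/2, b·√3/2)`), and `o = true` is the
down-pointing unit triangle with vertices `(a+1,b), (a,b+1), (a+1,b+1)`. -/
abbrev Tri : Type := ℤ × ℤ × Bool

/-- Adjacency from an up-pointing triangle `s` to a down-pointing triangle `t`
(sharing a unit edge). -/
def adjUD (s t : Tri) : Prop :=
  s.2.2 = false ∧ t.2.2 = true ∧
    ((t.1 = s.1 ∧ t.2.1 = s.2.1) ∨ (t.1 = s.1 - 1 ∧ t.2.1 = s.2.1) ∨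
      (t.1 = s.1 ∧ t.2.1 = s.2.1 - 1))

/-- Two unit triangles share a unit edge (form a lozenge). -/
def adj (s t : Tri) : Prop := adjUD s t ∨ adjUD t s

/-- A lozenge tiling of the region `R` with barrier edges `Bar`, encoded as the
involution pairing each unit triangle of `R` with the one it is matched to. -/
def IsTiling (R : Set Tri) (Bar : Set (Tri × Tri)) (f : Tri → Tri) : Prop :=
  (∀ t, t ∉ R → f t = t) ∧
    ∀ t ∈ R, f t ∈ R ∧ adj t (f t) ∧ f (f t) = t ∧ (t, f t) ∉ Bar ∧ (f t, t) ∉ Bar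

/-- `M R Bar` : the number of lozenge tilings of the region `R` with barriers `Bar`. -/
noncomputable def M (R : Set Tri) (Bar : Set (Tri × Tri)) : ℕ :=
  Nat.card {f : Tri → Tri // IsTiling R Bar f}

/-- 180° rotation about the point `(c.1/2, c.2/2)` (lattice coordinates). -/
def rot (c : ℤ × ℤ) (t : Tri) : Tri := (c.1 - t.1 - 1, c.2 - t.2.1 - 1, !t.2.2)

/-- `Mc c R Bar` : the number of lozenge tilings of `R` invariant under the 180°
rotation about the point `(c.1/2, c.2/2)`. -/
noncomputable def Mc (c : ℤ × ℤ) (R : Set Tri) (Bar : Set (Tri × Tri)) : ℕ :=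
  Nat.card {f : Tri → Tri // IsTiling R Bar f ∧ ∀ t, f (rot c t) = rot c (f t)}

/-- The doubly-dented hexagon whose horizontal axis (at height `0`) runs from the
west vertex `(0,0)` to the east vertex `(L,0)`, whose upper half is a trapezoid of
height `hu` and whose lower half is a trapezoid of height `hd`; the up-pointing unit
triangle just above the axis at position `i` is removed for `i ∈ U`, and the
down-pointing one just below the axis at position `i` is removed for `i ∈ D`
(positions are labelled `1,…,L` from left to right). -/
def HRegion (L hu hd : ℤ) (U D : Set ℤ) : Set Tri :=
  {t | (t.2.2 = false ∧ 0 ≤ t.2.1 ∧ t.2.1 < hu ∧ 0 ≤ t.1 ∧ t.1 + t.2.1 ≤ L - 1 ∧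
          (t.2.1 = 0 → t.1 + 1 ∉ U)) ∨
       (t.2.2 = true ∧ 0 ≤ t.2.1 ∧ t.2.1 < hu ∧ 0 ≤ t.1 ∧ t.1 + t.2.1 ≤ L - 2) ∨
       (t.2.2 = false ∧ -hd ≤ t.2.1 ∧ t.2.1 ≤ -1 ∧ -t.2.1 ≤ t.1 ∧ t.1 ≤ L - 1) ∨
       (t.2.2 = true ∧ -hd ≤ t.2.1 ∧ t.2.1 ≤ -1 ∧ -t.2.1 - 1 ≤ t.1 ∧ t.1 ≤ L - 1 ∧
          (t.2.1 = -1 → t.1 + 1 ∉ D))}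

/-- The barrier edges along the axis at the positions of `B`: the barrier at
position `i` forbids the vertical lozenge formed by the up-triangle just above and
the down-triangle just below the `i`-th unit segment of the axis. -/
def HBar (B : Set ℤ) : Set (Tri × Tri) :=
  {e | ∃ i ∈ B, e = ((i - 1, 0, false), (i - 1, -1, true)) ∨
                 e = ((i - 1, -1, true), (i - 1, 0, false))}

/-- `MH x y U D B` : the number of lozenge tilings of the doubly-dented hexagon
`H_{x,y}(U; D; B)`. -/
noncomputable def MH (x y : ℕ) (U D B : Finset ℤ) : ℕ :=
  M (HRegion (x + y + (U ∪ D).card) (y + U.card) (y + D.card) ↑U ↑D) (HBar ↑B)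

/-- `mir N W = {N + 1 - w : w ∈ W}`, the reflection of an index set. -/
def mir (N : ℤ) (W : Finset ℤ) : Finset ℤ := W.image (fun w => N + 1 - w)

/-- `MCS x y U D B` : the number of lozenge tilings of the centrally symmetric
doubly-dented hexagon `CS_{x,y}(U; D; B) = H_{x,y}(U ∪ D̄; D ∪ Ū; B ∪ B̄)`,
where `N = x + y + 2|U ∪ D|` and `W̄ = {N+1-w : w ∈ W}`. -/
noncomputable def MCS (x y : ℕ) (U D B : Finset ℤ) : ℕ :=
  MH x y (U ∪ mir (x + y + 2 * (U ∪ D).card) D) (D ∪ mir (x + y + 2 * (U ∪ D).card) U)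
    (B ∪ mir (x + y + 2 * (U ∪ D).card) B)

/-- `McCS x y U D B` : the number of centrally symmetric lozenge tilings of
`CS_{x,y}(U; D; B)` (tilings invariant under the 180° rotation about the center
`(N/2, 0)` of the region, `N = x + y + 2|U ∪ D|`). -/
noncomputable def McCS (x y : ℕ) (U D B : Finset ℤ) : ℕ :=
  let N : ℤ := x + y + 2 * (U ∪ D).card
  let U' : Finset ℤ := U ∪ mir N D
  let D' : Finset ℤ := D ∪ mir N U
  Mc (N, 0)
    (HRegion (x + y + (U' ∪ D').card) (y + U'.card) (y + D'.card) ↑U' ↑D')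
    (HBar ↑(B ∪ mir N B))

/-- `Δprod S = ∏_{s < s' ∈ S} (s' - s)`. -/
def Δprod (S : Finset ℤ) : ℤ :=
  ∏ p ∈ (S ×ˢ S).filter (fun p => p.1 < p.2), (p.2 - p.1)

/-- MacMahon's box formula `PP(a,b,c)`. -/
def PP (a b c : ℕ) : ℚ :=
  ∏ i ∈ Icc 1 a, ∏ j ∈ Icc 1 b, ∏ k ∈ Icc 1 c,
    (((i : ℚ) + j + k - 1) / ((i : ℚ) + j + k - 2))

/-- The hyperfactorial `H(n) = 0!·1!⋯(n-1)!`. -/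
def hyperfac (n : ℕ) : ℕ := ∏ k ∈ range n, k.factorial

/-- The Pochhammer symbol `(q)_r = q(q+1)⋯(q+r-1)`. -/
def poch (q : ℚ) (r : ℕ) : ℚ := ∏ i ∈ range r, (q + i)

/-- The dented semihexagon `T_{a,b}(S)`: the trapezoid with north side `b`, slanted
sides `a` and base `a + b` lying above the horizontal axis (base from `(0,0)` to
`(a+b,0)`), with the up-pointing unit triangles at the positions of `S` removed
from its base. -/
def TRegion (a b : ℤ) (S : Set ℤ) : Set Tri :=
  {t | (t.2.2 = false ∧ 0 ≤ t.2.1 ∧ t.2.1 < a ∧ 0 ≤ t.1 ∧ t.1 + t.2.1 ≤ a + b - 1 ∧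
          (t.2.1 = 0 → t.1 + 1 ∉ S)) ∨
       (t.2.2 = true ∧ 0 ≤ t.2.1 ∧ t.2.1 < a ∧ 0 ≤ t.1 ∧ t.1 + t.2.1 ≤ a + b - 2)}

/-- `MT a b S` : the number of lozenge tilings of `T_{a,b}(S)`. -/
noncomputable def MT (a b : ℤ) (S : Finset ℤ) : ℕ := M (TRegion a b ↑S) ∅

/-- The trapezoid with base `L` (from `(0,0)` to `(L,0)`), height `h`. -/
def trapRegion (L h : ℤ) : Set Tri :=
  {t | (t.2.2 = false ∧ 0 ≤ t.2.1 ∧ t.2.1 < h ∧ 0 ≤ t.1 ∧ t.1 + t.2.1 ≤ L - 1) ∨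
       (t.2.2 = true ∧ 0 ≤ t.2.1 ∧ t.2.1 < h ∧ 0 ≤ t.1 ∧ t.1 + t.2.1 ≤ L - 2)}

/-- The unit triangles of the up-pointing triangle of side `s` whose base runs from
`(p,0)` to `(p+s,0)` (lying above the axis). -/
def upTriSet (p : ℤ) (s : ℕ) : Set Tri :=
  {t | t.2.2 = false ∧ 0 ≤ t.2.1 ∧ p ≤ t.1 ∧ t.1 + t.2.1 ≤ p + s - 1} ∪
  {t | t.2.2 = true ∧ 0 ≤ t.2.1 ∧ p ≤ t.1 ∧ t.1 + t.2.1 ≤ p + s - 2}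

/-- The unit triangles of the down-pointing triangle of side `s` whose top edge runs
from `(p,0)` to `(p+s,0)` (lying below the axis). -/
def downTriSet (p : ℤ) (s : ℕ) : Set Tri :=
  {t | t.2.2 = true ∧ -(s : ℤ) ≤ t.2.1 ∧ t.2.1 ≤ -1 ∧ p - t.2.1 - 1 ≤ t.1 ∧ t.1 ≤ p + s - 1} ∪
  {t | t.2.2 = false ∧ -(s : ℤ) ≤ t.2.1 ∧ t.2.1 ≤ -1 ∧ p - t.2.1 ≤ t.1 ∧ t.1 ≤ p + s - 1}

/-- A triangle of side `s` along the axis starting at `p`, up- or down-pointing. -/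
def triSet (p : ℤ) (s : ℕ) (up : Bool) : Set Tri :=
  if up then upTriSet p s else downTriSet p s

/-- The removed triangles, at the dents given by a run/gap sequence
`a₁ (run), a₂ (gap), a₃ (run), …` starting at `p`. -/
def seqRemoved : ℤ → List ℕ → Set Tri
  | _, [] => ∅
  | p, [s] => upTriSet p s
  | p, s :: g :: r => upTriSet p s ∪ seqRemoved (p + s + g) r

/-- `oSum [a₁,a₂,…] = a₁ + a₃ + a₅ + ⋯`. -/
def oSum : List ℕ → ℕ
  | [] => 0
  | [s] => s
  | s :: _ :: r => s + oSum r

/-- `sFun l = s(a₁,…,a_r)` : the number of lozenge tilings of the generalized dented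
semihexagon `S(a₁,…,a_r)` (trapezoid of base `a₁+⋯+a_r` and height `a₁+a₃+⋯`, with
up-pointing triangles of sides `a₁, a₃, …` removed from its base at mutual
distances `a₂, a₄, …`, the first one touching the west vertex). -/
noncomputable def sFun (l : List ℕ) : ℕ :=
  M (trapRegion l.sum (oSum l) \ seqRemoved 0 l) ∅

/-- A fern: a chain of lattice triangles of alternating orientations along the axis,
given by the list of side-lengths and the orientation of the first triangle. -/
structure Fern where
  lengths : List ℕ
  firstUp : Bool

/-- The total length of a fern. -/
def Fern.total (F : Fern) : ℕ := F.lengths.sum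

/-- Sum of the entries at even positions if the flag is `true` (resp. odd positions
if `false`). -/
def upLenAux : Bool → List ℕ → ℕ
  | _, [] => 0
  | true, s :: r => s + upLenAux false r
  | false, _ :: r => upLenAux true r

/-- The sum of side-lengths of the up-pointing triangles of a fern. -/
def Fern.up (F : Fern) : ℕ := upLenAux F.firstUp F.lengths

/-- The sum of side-lengths of the down-pointing triangles of a fern. -/
def Fern.down (F : Fern) : ℕ := upLenAux (!F.firstUp) F.lengths

/-- The image of a fern under 180° rotation. -/
def Fern.rot (F : Fern) : Fern :=
  ⟨F.lengths.reverse, if F.lengths.length % 2 = 1 then !F.firstUp else F.firstUp⟩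

/-- Concatenation of two ferns (the second continuing the alternation of the first). -/
def Fern.cat (F G : Fern) : Fern := ⟨F.lengths ++ G.lengths, F.firstUp⟩

/-- The unit triangles of a chain of triangles of alternating orientations starting
at `p` with the first orientation `o`. -/
def chainSet : ℤ → Bool → List ℕ → Set Tri
  | _, _, [] => ∅
  | p, o, s :: r => triSet p s o ∪ chainSet (p + s) (!o) r

/-- The unit triangles of the ferns `Fs` placed along the axis starting at `p` with
gaps `ds` between consecutive ferns. -/
def fernsSet : ℤ → List Fern → List ℕ → Set Tri
  | _, [], _ => ∅
  | p, F :: Fs, ds => chainSet p F.firstUp F.lengths ∪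
      fernsSet (p + F.total + ds.headI) Fs ds.tail

def totUp (Fs : List Fern) : ℕ := (Fs.map Fern.up).sum
def totDown (Fs : List Fern) : ℕ := (Fs.map Fern.down).sum

/-- The hexagon with ferns removed `R_{x,y}(F₁,…,F_k | d₁,…,d_{k-1})`. -/
def RRegion (x y : ℕ) (Fs : List Fern) (ds : List ℕ) : Set Tri :=
  HRegion (x + y + totUp Fs + totDown Fs) (y + totUp Fs) (y + totDown Fs) ∅ ∅ \
    fernsSet 0 Fs ds

/-- The number of lozenge tilings of `R_{x,y}(F₁,…,F_k | d₁,…,d_{k-1})`. -/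
noncomputable def MR (x y : ℕ) (Fs : List Fern) (ds : List ℕ) : ℕ :=
  M (RRegion x y Fs ds) ∅

/-- The number of centrally symmetric lozenge tilings of
`R_{x,y}(F₁,…,F_k | d₁,…,d_{k-1})` (for a centrally symmetric datum; the center of
the hexagon is the midpoint `(L/2, 0)` of its axis). -/
noncomputable def McR (x y : ℕ) (Fs : List Fern) (ds : List ℕ) : ℕ :=
  Mc ((x + y + totUp Fs + totDown Fs : ℤ), 0) (RRegion x y Fs ds) ∅

/-- The positions (labelled `1,2,…` from the left) of the removed up-pointing unit
triangles just above the axis, for a chain starting at `p` with first orientation `o`. -/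
noncomputable def upRunPos : ℤ → Bool → List ℕ → Finset ℤ
  | _, _, [] => ∅
  | p, true, s :: r => Finset.Icc (p + 1) (p + s) ∪ upRunPos (p + s) false r
  | p, false, s :: r => upRunPos (p + s) true r

/-- The positions of the removed up-pointing unit triangles along the axis for the
ferns `Fs` with gaps `ds`, starting at `p`. -/
noncomputable def upPosAll : ℤ → List Fern → List ℕ → Finset ℤ
  | _, [], _ => ∅
  | p, F :: Fs, ds => upRunPos p F.firstUp F.lengths ∪
      upPosAll (p + F.total + ds.headI) Fs ds.tail

/-- The positions of the removed down-pointing unit triangles along the axis. -/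
noncomputable def downPosAll (p : ℤ) (Fs : List Fern) (ds : List ℕ) : Finset ℤ :=
  upPosAll p (Fs.map (fun F => Fern.mk F.lengths (!F.firstUp))) ds

/-- The unit triangles removed in the generalized dented semihexagon determined by
the maximal runs of the position set `A`: a unit triangle is removed precisely when
the interval of base positions it lies over is contained in `A`. -/
def runRemoved (A : Finset ℤ) : Set Tri :=
  {t | ∀ i ∈ Finset.Icc (t.1 + 1) (t.1 + t.2.1 + (if t.2.2 then 2 else 1)), i ∈ A}

/-- `MS A` : the number of lozenge tilings of the generalized dented semihexagon
`S(e₁, e₂, …)` where `e₁, e₃, …` are the lengths of the maximal runs of `A` and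
`e₂, e₄, …` the gaps between consecutive runs (base `= max A`, height `= |A|`). -/
noncomputable def MS (A : Finset ℤ) : ℕ :=
  M (trapRegion (WithBot.unbotD 0 A.max) A.card \ runRemoved A) ∅

/-- The fern list of `E_{x,y}(F₁,…,F_k | d₁,…,d_{k-1})`:
`F₁,…,F_{k-1}, F_k ∘ F̄_k, F̄_{k-1},…,F̄₁`. -/
def EFerns (Fs : List Fern) : List Fern :=
  Fs.dropLast ++ Fern.cat (Fs.getLastD ⟨[], true⟩) (Fern.rot (Fs.getLastD ⟨[], true⟩)) ::
    (Fs.dropLast.map Fern.rot).reverse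

/-- The gap list of `E_{x,y}` : `d₁,…,d_{k-1},d_{k-1},…,d₁`. -/
def Egaps (ds : List ℕ) : List ℕ := ds ++ ds.reverse

/-- The fern list of `E'_{x,y}(F₁,…,F_k | d₁,…,d_{k-1})` : `F₁,…,F_k,F̄_k,…,F̄₁`. -/
def E'Ferns (Fs : List Fern) : List Fern := Fs ++ (Fs.map Fern.rot).reverse

/-- The gap list of `E'_{x,y}` : `d₁,…,d_{k-1},1,d_{k-1},…,d₁`. -/
def E'gaps (ds : List ℕ) : List ℕ := ds ++ 1 :: ds.reverse

end Shuf

/-!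
Adjoining a new point `t` to `S` multiplies `Δ` by `∏_{s ∈ S} |s - t|`. Both numerators arise
from the denominators by adjoining `1` to one of the sets `U ∪ W̄` and `N = N + 1 - 1` to the
other; `2M ≤ N` makes `U` and `W̄` disjoint and these points new. Reflection swaps distances
to `1` and to `N`, so ratio (i) is `|β - N| · w(U) · w(D)` and ratio (ii) is
`|β - 1| · w(U) · w(D)` with `w(A) = ∏_{a ∈ A} |a - 1| · |a - N|`, and
`w(U) · w(D) = w(U ∪ D) · w(U ∩ D)`.
-/

namespace Shuf

lemma Δprod_eq_prod_prod (S : Finset ℤ) :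
    Δprod S = ∏ a ∈ S, ∏ b ∈ S, if a < b then b - a else 1 := by
  rw [Δprod, prod_filter, prod_product]

lemma Δprod_pos (S : Finset ℤ) : 0 < Δprod S :=
  prod_pos fun _ hp => sub_pos.2 (mem_filter.1 hp).2

lemma Δprod_insert {t : ℤ} {S : Finset ℤ} (ht : t ∉ S) :
    Δprod (insert t S) = Δprod S * ∏ s ∈ S, |s - t| := by
  have hpair : ∀ s ∈ S,
      (if s < t then t - s else 1) * (if t < s then s - t else 1) = |s - t| := by
    intro s hs
    rcases lt_or_gt_of_ne (ne_of_mem_of_not_mem hs ht) with h | h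
    · simp [h, h.not_gt, abs_of_neg (sub_neg.2 h)]
    · simp [h, h.not_gt, abs_of_pos (sub_pos.2 h)]
  simp only [Δprod_eq_prod_prod, prod_insert ht, lt_irrefl, if_false, one_mul,
    prod_mul_distrib, ← prod_congr rfl hpair]
  ring

lemma mir_insert (N t : ℤ) (W : Finset ℤ) :
    mir N (insert t W) = insert (N + 1 - t) (mir N W) :=
  image_insert _ _ _

lemma prod_mir {α : Type*} [CommMonoid α] (N : ℤ) (W : Finset ℤ) (f : ℤ → α) :
    ∏ x ∈ mir N W, f x = ∏ w ∈ W, f (N + 1 - w) :=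
  prod_image fun _ _ _ _ h => by omega

lemma lt_of_mem_mir {N M : ℤ} (hNM : 2 * M ≤ N) {W : Finset ℤ} (hW : W ⊆ Icc 1 M)
    {x : ℤ} (hx : x ∈ mir N W) : M < x := by
  obtain ⟨w, hw, rfl⟩ := mem_image.1 hx
  have := mem_Icc.1 (hW hw)
  omega

lemma one_notMem_union_mir {N M : ℤ} (hNM : 2 * M ≤ N) {U W : Finset ℤ} (h1 : 1 ∉ U)
    (hW : W ⊆ Icc 1 M) : 1 ∉ U ∪ mir N W := by
  rw [mem_union, not_or]
  refine ⟨h1, fun h => ?_⟩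
  obtain ⟨w, hw, hw1⟩ := mem_image.1 h
  have := mem_Icc.1 (hW hw)
  omega

lemma self_notMem_union_mir {N M : ℤ} (hNM : 2 * M ≤ N) {U W : Finset ℤ}
    (hU : U ⊆ Icc 1 M) (h1 : 1 ∉ W) : N ∉ U ∪ mir N W := by
  rw [mem_union, not_or]
  refine ⟨fun h => ?_, fun h => ?_⟩
  · have := mem_Icc.1 (hU h)
    omega
  · obtain ⟨w, hw, hwN⟩ := mem_image.1 h
    exact h1 (by rwa [show w = 1 by omega] at hw)

lemma prod_abs_sub_union_mir {N M : ℤ} (hNM : 2 * M ≤ N) {U D : Finset ℤ}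
    (hU : U ⊆ Icc 1 M) (hD : D ⊆ Icc 1 M) (c : ℤ) :
    ∏ x ∈ U ∪ mir N D, |x - c| = (∏ u ∈ U, |u - c|) * ∏ d ∈ D, |d - (N + 1 - c)| := by
  have hdisj : Disjoint U (mir N D) := disjoint_left.2 fun u hu hu' =>
    (lt_of_mem_mir hNM hD hu').not_ge (mem_Icc.1 (hU hu)).2
  rw [prod_union hdisj, prod_mir]
  congr 1
  exact prod_congr rfl fun d _ => by rw [← abs_neg]; ring_nf

def endDist (N : ℤ) (A : Finset ℤ) : ℤ := ∏ a ∈ A, |a - 1| * |a - N|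

lemma endDist_union_mul_inter (N : ℤ) (A B : Finset ℤ) :
    endDist N (A ∪ B) * endDist N (A ∩ B) = endDist N A * endDist N B :=
  prod_union_inter

lemma Δprod_ratios {N M : ℤ} (hNM : 2 * M ≤ N) {U D : Finset ℤ} (hUD : U ∪ D ⊆ Icc 1 M)
    (h1 : (1 : ℤ) ∉ U ∪ D) {β : ℤ} (hβ : β ∈ Icc 2 M \ (U ∪ D)) :
    ((Δprod (U ∪ mir N (insert 1 D)) * Δprod (insert 1 U ∪ mir N (insert β D)) : ℤ) : ℚ) /
        ((Δprod (U ∪ mir N D) * Δprod (U ∪ mir N (insert β D)) : ℤ) : ℚ) =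
      ((|β - N| * (endDist N U * endDist N D) : ℤ) : ℚ) ∧
    ((Δprod (insert 1 U ∪ mir N D) * Δprod (U ∪ mir N (insert 1 (insert β D))) : ℤ) : ℚ) /
        ((Δprod (U ∪ mir N D) * Δprod (U ∪ mir N (insert β D)) : ℤ) : ℚ) =
      ((|β - 1| * (endDist N U * endDist N D) : ℤ) : ℚ) := by
  obtain ⟨hU, hD⟩ := union_subset_iff.1 hUD
  obtain ⟨h1U, h1D⟩ := not_or.1 (mem_union.not.1 h1)
  obtain ⟨hβI, hβUD⟩ := mem_sdiff.1 hβ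
  have hβD : β ∉ D := fun h => hβUD (mem_union_right U h)
  have hβ1 := (mem_Icc.1 hβI).1
  have hDβ : insert β D ⊆ Icc 1 M := insert_subset (mem_Icc.2 ⟨by omega, (mem_Icc.1 hβI).2⟩) hD
  have h1Dβ : (1 : ℤ) ∉ insert β D := by
    rw [mem_insert, not_or]
    exact ⟨by omega, h1D⟩
  have hden : Δprod (U ∪ mir N D) * Δprod (U ∪ mir N (insert β D)) ≠ 0 :=
    (mul_pos (Δprod_pos _) (Δprod_pos _)).ne'
  have hmir1 : ∀ W, U ∪ mir N (insert 1 W) = insert N (U ∪ mir N W) := fun W => by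
    rw [mir_insert, add_sub_cancel_right, union_insert]
  simp only [div_eq_iff ((Int.cast_ne_zero (α := ℚ)).2 hden), ← Int.cast_mul, Int.cast_inj]
  rw [insert_union, insert_union, hmir1, hmir1,
    Δprod_insert (self_notMem_union_mir hNM hU h1D),
    Δprod_insert (one_notMem_union_mir hNM h1U hDβ),
    Δprod_insert (one_notMem_union_mir hNM h1U hD),
    Δprod_insert (self_notMem_union_mir hNM hU h1Dβ)]
  simp only [prod_abs_sub_union_mir hNM hU hD, prod_abs_sub_union_mir hNM hU hDβ,
    prod_insert hβD, endDist, prod_mul_distrib, add_sub_cancel_right, add_sub_cancel_left]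
  constructor <;> ring

theorem stmt10_general (N M : ℕ) (hNM : 2 * M ≤ N)
    (U D U' D' : Finset ℤ)
    (hU : U ⊆ Icc 1 (M : ℤ)) (hD : D ⊆ Icc 1 (M : ℤ))
    (hUD : U ∪ D = U' ∪ D') (hI : U ∩ D = U' ∩ D')
    (h1 : (1 : ℤ) ∉ U ∪ D)
    (β : ℤ) (hβ : β ∈ Icc (2 : ℤ) (M : ℤ) \ (U ∪ D)) :
    ((Δprod (U ∪ mir N (insert 1 D)) * Δprod (insert 1 U ∪ mir N (insert β D)) : ℤ) : ℚ) /
        ((Δprod (U ∪ mir N D) * Δprod (U ∪ mir N (insert β D)) : ℤ) : ℚ) =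
      ((Δprod (U' ∪ mir N (insert 1 D')) * Δprod (insert 1 U' ∪ mir N (insert β D')) : ℤ) : ℚ) /
        ((Δprod (U' ∪ mir N D') * Δprod (U' ∪ mir N (insert β D')) : ℤ) : ℚ) ∧
    ((Δprod (insert 1 U ∪ mir N D) * Δprod (U ∪ mir N (insert 1 (insert β D))) : ℤ) : ℚ) /
        ((Δprod (U ∪ mir N D) * Δprod (U ∪ mir N (insert β D)) : ℤ) : ℚ) =
      ((Δprod (insert 1 U' ∪ mir N D') * Δprod (U' ∪ mir N (insert 1 (insert β D'))) : ℤ) : ℚ) /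
        ((Δprod (U' ∪ mir N D') * Δprod (U' ∪ mir N (insert β D')) : ℤ) : ℚ) := by
  have hNM' : 2 * (M : ℤ) ≤ N := by exact_mod_cast hNM
  have hsub : U ∪ D ⊆ Icc 1 (M : ℤ) := union_subset hU hD
  obtain ⟨r1, r2⟩ := Δprod_ratios hNM' hsub h1 hβ
  obtain ⟨r1', r2'⟩ := Δprod_ratios hNM' (hUD ▸ hsub) (hUD ▸ h1) (hUD ▸ hβ)
  have hw : endDist N U * endDist N D = endDist N U' * endDist N D' := by
    rw [← endDist_union_mul_inter, hUD, hI, endDist_union_mul_inter]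
  rw [r1, r2, r1', r2', hw]
  exact ⟨rfl, rfl⟩

/-- Claim 2: the two Δ-ratios in the case `1 ∉ U ∪ D`. -/
theorem stmt10 (N M : ℕ) (hN : 0 < N) (hM : 0 < M) (hNM : 2 * M ≤ N)
    (U D U' D' : Finset ℤ)
    (hU : U ⊆ Icc 1 (M : ℤ)) (hD : D ⊆ Icc 1 (M : ℤ))
    (hU' : U' ⊆ Icc 1 (M : ℤ)) (hD' : D' ⊆ Icc 1 (M : ℤ))
    (hUD : U ∪ D = U' ∪ D') (hI : U ∩ D = U' ∩ D')
    (h1 : (1 : ℤ) ∉ U ∪ D)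
    (β : ℤ) (hβ : β ∈ Icc (2 : ℤ) (M : ℤ) \ (U ∪ D)) :
    ((Δprod (U ∪ mir N (insert 1 D)) * Δprod (insert 1 U ∪ mir N (insert β D)) : ℤ) : ℚ) /
        ((Δprod (U ∪ mir N D) * Δprod (U ∪ mir N (insert β D)) : ℤ) : ℚ) =
      ((Δprod (U' ∪ mir N (insert 1 D')) * Δprod (insert 1 U' ∪ mir N (insert β D')) : ℤ) : ℚ) /
        ((Δprod (U' ∪ mir N D') * Δprod (U' ∪ mir N (insert β D')) : ℤ) : ℚ) ∧
    ((Δprod (insert 1 U ∪ mir N D) * Δprod (U ∪ mir N (insert 1 (insert β D))) : ℤ) : ℚ) /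
        ((Δprod (U ∪ mir N D) * Δprod (U ∪ mir N (insert β D)) : ℤ) : ℚ) =
      ((Δprod (insert 1 U' ∪ mir N D') * Δprod (U' ∪ mir N (insert 1 (insert β D'))) : ℤ) : ℚ) /
        ((Δprod (U' ∪ mir N D') * Δprod (U' ∪ mir N (insert β D')) : ℤ) : ℚ) :=
  stmt10_general N M hNM U D U' D' hU hD hUD hI h1 β hβ

end Shuf
end

section
/- Let x be a nonnegative integer and let U, D, B ⊆ {1,…,⌊N/2⌋} with n=|U∪D|, N=x+2n, B∩(U∪D)=∅ and 2|B| ≤ x. Write u=|U|, d=|D|, m=2n−u−d (=|UΔD|) and D̄={N+1−t : t∈D}. Then M_c(CS_{x,0}(U;D;B)) = M(T_{u+d, x+m}(U∪D̄)), i.e. the number of centrally symmetric lozenge tilings of CS_{x,0}(U;D;B) equals the number of lozenge tilings of the dented semihexagon with north side x+m, slanted sides u+d, base N, and dents at the positions of U∪D̄. -/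
open Finset

/-!
For `y = 0` the upper half of `CS_{x,0}(U; D; B)` is exactly `T_{u+d, x+m}(U ∪ D̄)`, and the
half-turn about the centre maps it onto the lower half. In a trapezoid of height `a` the
up-pointing unit triangles outnumber the down-pointing ones by `a`, and here the `a = u + d`
dents remove exactly that excess. Since a down-pointing triangle on or above the axis can only
be matched with an up-pointing one on or above the axis, counting shows that no lozenge of any
tiling crosses the axis. A centrally symmetric tiling is therefore a tiling of the upper half
together with its rotated copy.
-/

namespace Shuf

lemma mem_mir {N w : ℤ} {W : Finset ℤ} : w ∈ mir N W ↔ N + 1 - w ∈ W := by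
  simp only [mir, Finset.mem_image]
  exact ⟨fun ⟨v, hv, hvw⟩ => by rwa [← hvw, sub_sub_cancel], fun h => ⟨_, h, by ring⟩⟩

lemma mir_mir (N : ℤ) (W : Finset ℤ) : mir N (mir N W) = W := by
  ext w
  simp only [mem_mir, sub_sub_cancel]

lemma card_mir (N : ℤ) (W : Finset ℤ) : (mir N W).card = W.card :=
  Finset.card_image_of_injective _ fun _ _ h => by simpa using h

lemma mir_union (N : ℤ) (V W : Finset ℤ) : mir N (V ∪ W) = mir N V ∪ mir N W :=
  Finset.image_union _ _

lemma mir_subset_Icc {N : ℤ} {W : Finset ℤ} (hW : W ⊆ Icc 1 N) : mir N W ⊆ Icc 1 N := by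
  intro w hw
  have := Finset.mem_Icc.mp (hW (mem_mir.mp hw))
  exact Finset.mem_Icc.mpr ⟨by omega, by omega⟩

lemma disjoint_mir_of_subset_Icc {N h : ℤ} {V W : Finset ℤ} (hV : V ⊆ Icc 1 h)
    (hW : W ⊆ Icc 1 h) (hh : 2 * h ≤ N) : Disjoint V (mir N W) := by
  refine Finset.disjoint_left.mpr fun w hwV hwW => ?_
  have h1 := Finset.mem_Icc.mp (hV hwV)
  have h2 := Finset.mem_Icc.mp (hW (mem_mir.mp hwW))
  omega

lemma rot_rot (c : ℤ × ℤ) (t : Tri) : rot c (rot c t) = t := by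
  obtain ⟨a, b, o⟩ := t
  simp only [rot, Bool.not_not, Prod.mk.injEq, and_true]
  omega

lemma rot_row (L : ℤ) (t : Tri) : (rot (L, 0) t).2.1 = -t.2.1 - 1 := by
  simp only [rot]
  ring

lemma adjUD_rot {c : ℤ × ℤ} {s t : Tri} (h : adjUD s t) : adjUD (rot c t) (rot c s) := by
  obtain ⟨hs, ht, H⟩ := h
  refine ⟨by simp [rot, ht], by simp [rot, hs], ?_⟩
  simp only [rot]
  omega

lemma adj_rot {c : ℤ × ℤ} {s t : Tri} (h : adj s t) : adj (rot c s) (rot c t) :=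
  h.elim (fun h => Or.inr (adjUD_rot h)) (fun h => Or.inl (adjUD_rot h))

def upperHalf (R : Set Tri) : Set Tri := {t ∈ R | 0 ≤ t.2.1}

def ups (T : Set Tri) : Set Tri := {t ∈ T | t.2.2 = false}

def downs (T : Set Tri) : Set Tri := {t ∈ T | t.2.2 = true}

lemma upperHalf_HRegion (L hu hd : ℤ) (U D : Set ℤ) :
    upperHalf (HRegion L hu hd U D) = TRegion hu (L - hu) U := by
  ext ⟨p, q, o⟩
  simp only [upperHalf, HRegion, TRegion, Set.mem_ofPred_eq, add_sub_cancel]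
  constructor
  · rintro ⟨h | h | h | h, hq⟩
    · exact Or.inl h
    · exact Or.inr h
    · omega
    · omega
  · rintro (h | h)
    · exact ⟨Or.inl h, h.2.1⟩
    · exact ⟨Or.inr (Or.inl h), h.2.1⟩

lemma rot_mem_HRegion {L hu hd : ℤ} {U D : Finset ℤ} {t : Tri}
    (ht : t ∈ HRegion L hu hd ↑U ↑D) :
    rot (L, 0) t ∈ HRegion L hd hu ↑(mir L D) ↑(mir L U) := by
  obtain ⟨p, q, o⟩ := t
  have hdent : ∀ W : Finset ℤ, p + 1 ∉ W → L - p - 1 + 1 ∉ mir L W := fun W hW hmem =>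
    hW (by rw [mem_mir] at hmem; convert hmem using 1; ring)
  simp only [HRegion, rot, Set.mem_ofPred_eq, Finset.mem_coe] at ht ⊢
  rcases ht with ⟨rfl, h1, h2, h3, h4, h5⟩ | ⟨rfl, h1, h2, h3, h4⟩ | ⟨rfl, h1, h2, h3, h4⟩ |
      ⟨rfl, h1, h2, h3, h4, h5⟩
  · exact Or.inr (Or.inr (Or.inr ⟨rfl, by omega, by omega, by omega, by omega,
      fun hq => hdent U (h5 (by omega))⟩))
  · exact Or.inr (Or.inr (Or.inl ⟨rfl, by omega, by omega, by omega, by omega⟩))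
  · exact Or.inr (Or.inl ⟨rfl, by omega, by omega, by omega, by omega⟩)
  · exact Or.inl ⟨rfl, by omega, by omega, by omega, by omega,
      fun hq => hdent D (h5 (by omega))⟩

lemma TRegion_finite (a b : ℤ) (S : Set ℤ) : (TRegion a b S).Finite := by
  refine ((Set.finite_Icc 0 (a + b)).prod ((Set.finite_Icc 0 a).prod Set.finite_univ)).subset ?_
  rintro ⟨p, q, o⟩ (⟨-, h1, h2, h3, h4, -⟩ | ⟨-, h1, h2, h3, h4⟩) <;>
    exact ⟨⟨h3, by omega⟩, ⟨h1, h2.le⟩, trivial⟩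

lemma downs_TRegion (a b : ℤ) (S : Set ℤ) : downs (TRegion a b S) = downs (TRegion a b ∅) := by
  ext ⟨p, q, o⟩
  simp only [downs, TRegion, Set.mem_ofPred_eq, Set.mem_empty_iff_false]
  constructor <;> rintro ⟨h | h, rfl⟩ <;> simp_all

lemma ups_TRegion_union_dents {b : ℤ} {S : Finset ℤ} (hS : S ⊆ Icc 1 (S.card + b)) :
    ups (TRegion S.card b ↑S) ∪ (fun s => ((s - 1, 0, false) : Tri)) '' ↑S =
      ups (TRegion S.card b ∅) := by
  ext ⟨p, q, o⟩
  simp only [ups, TRegion, Set.mem_union, Set.mem_image, Set.mem_ofPred_eq, Finset.mem_coe,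
    Set.mem_empty_iff_false, Prod.mk.injEq]
  constructor
  · rintro (⟨⟨rfl, h⟩ | ⟨rfl, -⟩, ho⟩ | ⟨s, hs, rfl, rfl, rfl⟩)
    · exact ⟨Or.inl ⟨rfl, h.1, h.2.1, h.2.2.1, h.2.2.2.1, fun _ => id⟩, rfl⟩
    · cases ho
    · have hs' := Finset.mem_Icc.mp (hS hs)
      have : (0 : ℤ) < S.card := Nat.cast_pos.mpr (Finset.card_pos.mpr ⟨s, hs⟩)
      exact ⟨Or.inl ⟨rfl, le_rfl, this, by omega, by omega, fun _ => id⟩, rfl⟩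
  · rintro ⟨⟨rfl, h⟩ | ⟨rfl, -⟩, ho⟩
    · by_cases hd : q = 0 ∧ p + 1 ∈ S
      · exact Or.inr ⟨p + 1, hd.2, by ring, hd.1.symm, rfl⟩
      · exact Or.inl ⟨Or.inl ⟨rfl, h.1, h.2.1, h.2.2.1, h.2.2.2.1,
          fun hq hp => hd ⟨hq, hp⟩⟩, rfl⟩
    · cases ho

lemma ups_TRegion_empty {a b : ℤ} (hb : 0 ≤ b) :
    ups (TRegion a b ∅) =
      (fun t : Tri => ((t.1 + 1, t.2.1, false) : Tri)) '' downs (TRegion a b ∅) ∪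
        (fun q => ((0, q, false) : Tri)) '' Set.Ico 0 a := by
  ext ⟨p, q, o⟩
  simp only [ups, downs, TRegion, Set.mem_union, Set.mem_image, Set.mem_ofPred_eq,
    Set.mem_empty_iff_false, Set.mem_Ico, Prod.mk.injEq, Prod.exists]
  constructor
  · rintro ⟨⟨rfl, h⟩ | ⟨rfl, -⟩, ho⟩
    · rcases eq_or_lt_of_le h.2.2.1 with hp | hp
      · exact Or.inr ⟨q, ⟨h.1, h.2.1⟩, hp, rfl, rfl⟩
      · exact Or.inl ⟨p - 1, q, true, ⟨Or.inr ⟨rfl, h.1, h.2.1, by omega, by omega⟩, rfl⟩,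
          by ring, rfl, rfl⟩
    · cases ho
  · rintro (⟨p', q', o', ⟨⟨rfl, -⟩ | ⟨rfl, h⟩, ho⟩, rfl, rfl, rfl⟩ | ⟨q', ⟨h1, h2⟩, rfl, rfl, rfl⟩)
    · cases ho
    · exact ⟨Or.inl ⟨rfl, h.1, h.2.1, by omega, by omega, fun _ => id⟩, rfl⟩
    · exact ⟨Or.inl ⟨rfl, h1, h2, le_rfl, by omega, fun _ => id⟩, rfl⟩

/-- Putting the dents back gives the undented trapezoid, whose up-triangles are the right
shifts of its down-triangles together with a left column of height `#S`. -/
lemma encard_ups_TRegion {b : ℤ} {S : Finset ℤ} (hS : S ⊆ Icc 1 (S.card + b)) (hb : 0 ≤ b) :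
    (ups (TRegion S.card b ↑S)).encard = (downs (TRegion S.card b ↑S)).encard := by
  have hdents :
      Disjoint (ups (TRegion S.card b ↑S)) ((fun s => ((s - 1, 0, false) : Tri)) '' ↑S) := by
    refine Set.disjoint_right.mpr ?_
    rintro _ ⟨s, hs, rfl⟩ ⟨⟨-, -, -, -, -, hdent⟩ | ⟨ho, -⟩, -⟩
    · exact hdent rfl (by simpa using hs)
    · cases ho
  have hshift : Set.InjOn (fun t : Tri => ((t.1 + 1, t.2.1, false) : Tri))
      (downs (TRegion S.card b ∅)) := by
    rintro ⟨p, q, o⟩ ⟨-, rfl⟩ ⟨p', q', o'⟩ ⟨-, rfl⟩ h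
    simp only [Prod.mk.injEq, and_true] at h ⊢
    omega
  have hcolumn : Disjoint ((fun t : Tri => ((t.1 + 1, t.2.1, false) : Tri)) ''
      downs (TRegion S.card b ∅)) ((fun q => ((0, q, false) : Tri)) '' Set.Ico 0 S.card) := by
    refine Set.disjoint_left.mpr ?_
    rintro _ ⟨⟨p, q, o⟩, ⟨⟨-, -, -, hp, -⟩ | ⟨-, -, -, hp, -⟩, -⟩, rfl⟩ ⟨q', -, h⟩ <;>
      simp only [Prod.mk.injEq] at h <;> omega
  have key := congrArg Set.encard ((ups_TRegion_union_dents hS).trans (ups_TRegion_empty hb))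
  have hdent_inj : Function.Injective fun s => ((s - 1, 0, false) : Tri) := fun s t h => by
    simpa using h
  have hcolumn_inj : Function.Injective fun q => ((0, q, false) : Tri) := fun s t h => by
    simpa using h
  rw [Set.encard_union_eq hdents, Set.encard_union_eq hcolumn, hshift.encard_image,
    hdent_inj.encard_image, hcolumn_inj.encard_image,
    ← downs_TRegion _ _ ↑S, ← Finset.coe_Ico, Set.encard_coe_eq_coe_finsetCard,
    Set.encard_coe_eq_coe_finsetCard, Int.card_Ico, sub_zero, Int.toNat_natCast] at key
  exact WithTop.add_right_cancel (ENat.natCast_ne_top _) key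

lemma IsTiling.injOn {R : Set Tri} {Bar : Set (Tri × Tri)} {f : Tri → Tri}
    (hf : IsTiling R Bar f) : Set.InjOn f R := fun s hs t ht hst => by
  rw [← (hf.2 s hs).2.2.1, hst, (hf.2 t ht).2.2.1]

lemma IsTiling.mapsTo_downs_upperHalf {R : Set Tri} {Bar : Set (Tri × Tri)} {f : Tri → Tri}
    (hf : IsTiling R Bar f) : Set.MapsTo f (downs (upperHalf R)) (ups (upperHalf R)) := by
  rintro t ⟨⟨htR, hpos⟩, hdown⟩
  obtain ⟨hfR, hadj, -⟩ := hf.2 t htR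
  rcases hadj with ⟨hup, -⟩ | ⟨hup, -, hrow⟩
  · simp [hup] at hdown
  · exact ⟨⟨hfR, by rcases hrow with ⟨-, h⟩ | ⟨-, h⟩ | ⟨-, h⟩ <;> omega⟩, hup⟩

lemma IsTiling.mapsTo_upperHalf {R : Set Tri} {Bar : Set (Tri × Tri)} {f : Tri → Tri}
    (hf : IsTiling R Bar f) (hfin : (upperHalf R).Finite)
    (hbal : (ups (upperHalf R)).encard = (downs (upperHalf R)).encard) :
    Set.MapsTo f (upperHalf R) (upperHalf R) := by
  have hinj : Set.InjOn f (downs (upperHalf R)) := hf.injOn.mono fun t ht => ht.1.1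
  have hsurj : f '' downs (upperHalf R) = ups (upperHalf R) :=
    ((hfin.subset fun t ht => ht.1).image f).eq_of_subset_of_encard_le
      hf.mapsTo_downs_upperHalf.image_subset (by rw [hinj.encard_image, hbal])
  intro t ht
  cases ho : t.2.2
  · obtain ⟨s, hs, rfl⟩ : t ∈ f '' downs (upperHalf R) := hsurj ▸ ⟨ht, ho⟩
    rw [(hf.2 s hs.1.1).2.2.1]
    exact hs.1
  · exact (hf.mapsTo_downs_upperHalf ⟨ht, ho⟩).1

open Classical in
noncomputable def restrictTo (T : Set Tri) (f : Tri → Tri) : Tri → Tri :=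
  fun t => if t ∈ T then f t else t

open Classical in
noncomputable def symmExtend (c : ℤ × ℤ) (T : Set Tri) (g : Tri → Tri) : Tri → Tri :=
  fun t => if t ∈ T then g t else if rot c t ∈ T then rot c (g (rot c t)) else t

lemma isTiling_restrictTo {R T : Set Tri} {Bar : Set (Tri × Tri)} {f : Tri → Tri}
    (hTR : T ⊆ R) (hf : IsTiling R Bar f) (hfT : Set.MapsTo f T T) :
    IsTiling T ∅ (restrictTo T f) := by
  refine ⟨fun t ht => if_neg ht, fun t ht => ?_⟩
  have hft : restrictTo T f t = f t := if_pos ht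
  have hfft : restrictTo T f (f t) = f (f t) := if_pos (hfT ht)
  rw [hft, hfft]
  exact ⟨hfT ht, (hf.2 t (hTR ht)).2.1, (hf.2 t (hTR ht)).2.2.1, id, id⟩

lemma symmExtend_rot {c : ℤ × ℤ} {T : Set Tri} (hT : ∀ t ∈ T, rot c t ∉ T) (g : Tri → Tri)
    (t : Tri) : symmExtend c T g (rot c t) = rot c (symmExtend c T g t) := by
  by_cases h1 : t ∈ T
  · simp [symmExtend, h1, hT t h1, rot_rot]
  · by_cases h2 : rot c t ∈ T <;> simp [symmExtend, h1, h2, rot_rot]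

section HalfTurn

variable {L : ℤ} {R : Set Tri}

lemma rot_notMem_upperHalf {t : Tri} (ht : t ∈ upperHalf R) : rot (L, 0) t ∉ upperHalf R :=
  fun h => by have := h.2; rw [rot_row] at this; have := ht.2; omega

lemma rot_mem_upperHalf (hR : ∀ t ∈ R, rot (L, 0) t ∈ R) {t : Tri} (ht : t ∈ R)
    (hneg : t ∉ upperHalf R) : rot (L, 0) t ∈ upperHalf R := by
  have : ¬0 ≤ t.2.1 := fun h => hneg ⟨ht, h⟩
  exact ⟨hR t ht, by rw [rot_row]; omega⟩

lemma notMem_of_sameSide {Bar : Set (Tri × Tri)}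
    (hBar : ∀ e ∈ Bar, (0 ≤ e.1.2.1 ↔ e.2.2.1 < 0)) {s t : Tri} (h : 0 ≤ s.2.1 ↔ 0 ≤ t.2.1) :
    (s, t) ∉ Bar ∧ (t, s) ∉ Bar := by
  constructor <;> intro hm <;> have := hBar _ hm <;> dsimp only at this <;> omega

lemma isTiling_symmExtend {Bar : Set (Tri × Tri)} (hR : ∀ t ∈ R, rot (L, 0) t ∈ R)
    (hBar : ∀ e ∈ Bar, (0 ≤ e.1.2.1 ↔ e.2.2.1 < 0)) {g : Tri → Tri}
    (hg : IsTiling (upperHalf R) ∅ g) : IsTiling R Bar (symmExtend (L, 0) (upperHalf R) g) := by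
  set h := symmExtend (L, 0) (upperHalf R) g
  have hrot (t : Tri) : h (rot (L, 0) t) = rot (L, 0) (h t) :=
    symmExtend_rot (fun _ => rot_notMem_upperHalf) g t
  have hupper : ∀ t ∈ upperHalf R, h t ∈ upperHalf R ∧ adj t (h t) ∧ h (h t) = t := by
    intro t ht
    obtain ⟨hgt, hadj, hgg, -⟩ := hg.2 t ht
    have e1 : h t = g t := if_pos ht
    have e2 : h (g t) = g (g t) := if_pos hgt
    exact ⟨e1 ▸ hgt, e1 ▸ hadj, by rw [e1, e2, hgg]⟩
  refine ⟨fun t ht => ?_, fun t ht => ?_⟩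
  · have h1 : t ∉ upperHalf R := fun h => ht h.1
    have h2 : rot (L, 0) t ∉ upperHalf R := fun h => ht (rot_rot (L, 0) t ▸ hR _ h.1)
    exact (if_neg h1).trans (if_neg h2)
  by_cases hpos : 0 ≤ t.2.1
  · obtain ⟨hT, hadj, hinv⟩ := hupper t ⟨ht, hpos⟩
    exact ⟨hT.1, hadj, hinv, notMem_of_sameSide hBar (iff_of_true hpos hT.2)⟩
  · obtain ⟨s, hs, rfl⟩ : ∃ s ∈ upperHalf R, rot (L, 0) s = t :=
      ⟨_, rot_mem_upperHalf hR ht fun h => hpos h.2, rot_rot _ _⟩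
    obtain ⟨hT, hadj, hinv⟩ := hupper s hs
    simp only [hrot, hinv]
    refine ⟨hR _ hT.1, adj_rot hadj, trivial, notMem_of_sameSide hBar ?_⟩
    have := hs.2
    have := hT.2
    simp only [rot_row]
    omega

theorem Mc_eq_M_upperHalf {Bar : Set (Tri × Tri)} (hR : ∀ t ∈ R, rot (L, 0) t ∈ R)
    (hBar : ∀ e ∈ Bar, (0 ≤ e.1.2.1 ↔ e.2.2.1 < 0))
    (hmaps : ∀ f, IsTiling R Bar f → Set.MapsTo f (upperHalf R) (upperHalf R)) :
    Mc (L, 0) R Bar = M (upperHalf R) ∅ := by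
  refine Nat.card_congr
    { toFun := fun f => ⟨restrictTo (upperHalf R) f.1,
        isTiling_restrictTo (fun _ ht => ht.1) f.2.1 (hmaps f.1 f.2.1)⟩
      invFun := fun g => ⟨symmExtend (L, 0) (upperHalf R) g.1, isTiling_symmExtend hR hBar g.2,
        symmExtend_rot (fun _ => rot_notMem_upperHalf) g.1⟩
      left_inv := ?_
      right_inv := ?_ }
  · rintro ⟨f, hf, hsym⟩
    ext t : 2
    by_cases h1 : t ∈ upperHalf R
    · exact (if_pos h1).trans (if_pos h1)
    by_cases h2 : rot (L, 0) t ∈ upperHalf R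
    · show symmExtend (L, 0) (upperHalf R) (restrictTo (upperHalf R) f) t = f t
      simp only [symmExtend, restrictTo, if_neg h1, if_pos h2]
      rw [← hsym, rot_rot]
    · have htR : t ∉ R := fun ht => h2 (rot_mem_upperHalf hR ht h1)
      exact ((if_neg h1).trans (if_neg h2)).trans (hf.1 t htR).symm
  · rintro ⟨g, hg⟩
    ext t : 2
    by_cases h1 : t ∈ upperHalf R
    · exact (if_pos h1).trans (if_pos h1)
    · exact (if_neg h1).trans (hg.1 t h1).symm

end HalfTurn

lemma HBar_crosses_axis (B : Set ℤ) : ∀ e ∈ HBar B, (0 ≤ e.1.2.1 ↔ e.2.2.1 < 0) := by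
  rintro e ⟨i, -, rfl | rfl⟩ <;> simp

theorem Mc_HRegion_mir {L : ℕ} {S : Finset ℤ} {Bar : Set (Tri × Tri)} (hS : S ⊆ Icc 1 (L : ℤ))
    (hBar : ∀ e ∈ Bar, (0 ≤ e.1.2.1 ↔ e.2.2.1 < 0)) :
    Mc (L, 0) (HRegion L S.card S.card ↑S ↑(mir L S)) Bar = MT S.card (L - S.card) S := by
  have hSL : (S.card : ℤ) ≤ L := by
    have := Finset.card_le_card hS
    rw [Int.card_Icc] at this
    omega
  have hrot (t : Tri) (ht : t ∈ HRegion L S.card S.card ↑S ↑(mir L S)) :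
      rot (L, 0) t ∈ HRegion L S.card S.card ↑S ↑(mir L S) := by
    simpa only [mir_mir] using rot_mem_HRegion ht
  have hfin := TRegion_finite S.card (L - S.card) ↑S
  have hbal := encard_ups_TRegion (by rwa [add_sub_cancel]) (sub_nonneg.mpr hSL)
  rw [← upperHalf_HRegion L _ S.card _ ↑(mir L S)] at hfin hbal
  rw [Mc_eq_M_upperHalf hrot hBar fun f hf => hf.mapsTo_upperHalf hfin hbal, upperHalf_HRegion]
  rfl

theorem stmt13_general (x : ℕ) (U D B : Finset ℤ)
    (n : ℕ) (hn : n = (U ∪ D).card) (N : ℕ) (hN : N = x + 2 * n)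
    (m : ℕ) (hm : m = 2 * n - U.card - D.card)
    (hU : U ⊆ Icc 1 ((N / 2 : ℕ) : ℤ)) (hD : D ⊆ Icc 1 ((N / 2 : ℕ) : ℤ)) :
    McCS x 0 U D B =
      MT ((U.card + D.card : ℕ) : ℤ) ((x + m : ℕ) : ℤ) (U ∪ mir (N : ℤ) D) := by
  have hhalf : 2 * ((N / 2 : ℕ) : ℤ) ≤ N := by omega
  have hUD := Finset.union_subset hU hD
  have hS : U ∪ mir N D ⊆ Icc 1 (N : ℤ) := by
    have hIcc := Finset.Icc_subset_Icc_right (a := (1 : ℤ)) (by omega : ((N / 2 : ℕ) : ℤ) ≤ N)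
    exact Finset.union_subset (hU.trans hIcc) (mir_subset_Icc (hD.trans hIcc))
  have hcardS : (U ∪ mir N D).card = U.card + D.card := by
    rw [Finset.card_union_of_disjoint (disjoint_mir_of_subset_Icc hU hD hhalf), card_mir]
  have hcardUD : (U ∪ D ∪ mir N (U ∪ D)).card = 2 * n := by
    rw [Finset.card_union_of_disjoint (disjoint_mir_of_subset_Icc hUD hUD hhalf), card_mir, hn]
    ring
  have hmirS : D ∪ mir N U = mir N (U ∪ mir N D) := by
    rw [mir_union, mir_mir, Finset.union_comm]
  have hSS : U ∪ mir N D ∪ mir N (U ∪ mir N D) = U ∪ D ∪ mir N (U ∪ D) := by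
    rw [← hmirS, mir_union]
    ac_rfl
  have hNz : (x : ℤ) + ((0 : ℕ) : ℤ) + 2 * ((U ∪ D).card : ℤ) = N := by
    push_cast
    omega
  have key := Mc_HRegion_mir hS (HBar_crosses_axis ↑(B ∪ mir N B))
  rw [hcardS] at key
  simp only [McCS]
  rw [hNz, hmirS, hSS, hcardUD, card_mir, hcardS]
  have hu := Finset.card_le_card (Finset.subset_union_left (s₁ := U) (s₂ := D))
  have hd := Finset.card_le_card (Finset.subset_union_right (s₁ := U) (s₂ := D))
  convert key using 3 <;> push_cast <;> omega

/-- base case `y = 0`. -/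
theorem stmt13 (x : ℕ) (U D B : Finset ℤ)
    (n : ℕ) (hn : n = (U ∪ D).card) (N : ℕ) (hN : N = x + 2 * n)
    (m : ℕ) (hm : m = 2 * n - U.card - D.card)
    (hU : U ⊆ Icc 1 ((N / 2 : ℕ) : ℤ)) (hD : D ⊆ Icc 1 ((N / 2 : ℕ) : ℤ))
    (hB : B ⊆ Icc 1 ((N / 2 : ℕ) : ℤ))
    (hBd : B ∩ (U ∪ D) = ∅) (hBcard : 2 * B.card ≤ x) :
    McCS x 0 U D B =
      MT ((U.card + D.card : ℕ) : ℤ) ((x + m : ℕ) : ℤ) (U ∪ mir (N : ℤ) D) :=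
  stmt13_general x U D B n hn N hN m hm hU hD

end Shuf
end
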